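/- Let V : ℝⁿ → ℝ be a positive definite quartic form. Then the origin is locally asymptotically stable for the quartic vector field ẋ = −∇V(x) + x⁴, where x⁴ denotes the componentwise fourth power. -/

import Mathlib

noncomputable section

open Real Set Filter

/-- Componentwise fourth power on `ℝⁿ`. -/
def pow4 {n : ℕ} (x : EuclideanSpace ℝ (Fin n)) : EuclideanSpace ℝ (Fin n) :=
  WithLp.toLp 2 (fun i => x i ^ 4)

/-- `x` is a solution of the ODE `x' = F(x)` on the time set `I`: a differentiable curve
whose derivative at every `t ∈ I` equals `F (x t)`. -/
def IsSolutionOn {E : Type*} [NormedAddCommGroup E] [NormedSpace ℝ E]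
    (F : E → E) (x : ℝ → E) (I : Set ℝ) : Prop :=
  ∀ t ∈ I, HasDerivAt x (F (x t)) t

/-- The origin is stable in the sense of Lyapunov for `x' = F(x)`. -/
def LyapunovStable {E : Type*} [NormedAddCommGroup E] [NormedSpace ℝ E] (F : E → E) : Prop :=
  ∀ ε > (0:ℝ), ∃ δ > (0:ℝ), ∀ (T : ℝ) (x : ℝ → E),
    IsSolutionOn F x (Set.Icc 0 T) → ‖x 0‖ < δ → ∀ t ∈ Set.Icc 0 T, ‖x t‖ < ε

/-- The origin is locally attractive for `x' = F(x)`. -/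
def LocallyAttractive {E : Type*} [NormedAddCommGroup E] [NormedSpace ℝ E] (F : E → E) : Prop :=
  ∃ δ > (0:ℝ), ∀ x : ℝ → E, IsSolutionOn F x (Set.Ici 0) → ‖x 0‖ < δ →
    Filter.Tendsto x Filter.atTop (nhds 0)

/-- The origin is locally asymptotically stable for `x' = F(x)`. -/
def LAS {E : Type*} [NormedAddCommGroup E] [NormedSpace ℝ E] (F : E → E) : Prop :=
  LyapunovStable F ∧ LocallyAttractive F


/-!
`V` itself is a strict Lyapunov function for `ẋ = -∇V(x) + x⁴`. Compactness of the unit sphere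
gives `V x ≥ a‖x‖⁴` with `a > 0`, and Euler's identity `⟪∇V x, x⟫ = 4 V x` together with
Cauchy–Schwarz then gives `‖∇V x‖ ≥ 4a‖x‖³`. Since `‖x⁴‖ ≤ ‖x‖⁴`, along the flow
`V̇ = -‖∇V‖² + ⟪∇V, x⁴⟫ ≤ -8a²‖x‖⁶` on the ball of radius `2a`: the quartic perturbation is of
higher order than the gradient term. Strict decrease of `V` on its small level sets makes the
sublevel sets forward invariant, which gives stability, and the uniform decay rate away from the
origin forces each trajectory into arbitrarily small sublevel sets, which gives attractivity.
-/

section Lyapunov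

variable {E : Type*} [NormedAddCommGroup E] [NormedSpace ℝ E] {F : E → E} {V : E → ℝ}
  {x : ℝ → E} {t₀ T : ℝ}

theorem IsSolutionOn.mono {I J : Set ℝ} (hx : IsSolutionOn F x I) (hJI : J ⊆ I) :
    IsSolutionOn F x J :=
  fun t ht => hx t (hJI ht)

theorem IsSolutionOn.hasDerivAt_comp {I : Set ℝ} (hV : Differentiable ℝ V)
    (hx : IsSolutionOn F x I) {t : ℝ} (ht : t ∈ I) :
    HasDerivAt (V ∘ x) (fderiv ℝ V (x t) (F (x t))) t :=
  (hV (x t)).hasFDerivAt.comp_hasDerivAt t (hx t ht)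

theorem IsSolutionOn.mapsTo_sublevel {c : ℝ} (hV : Differentiable ℝ V)
    (hx : IsSolutionOn F x (Icc t₀ T)) (hlevel : ∀ y, V y = c → fderiv ℝ V y (F y) < 0)
    (h₀ : V (x t₀) ≤ c) : MapsTo x (Icc t₀ T) {y | V y ≤ c} :=
  fun _ ht => image_le_of_deriv_right_lt_deriv_boundary (f := V ∘ x) (B := fun _ => c)
    (fun _ hs => (hx.hasDerivAt_comp hV hs).continuousAt.continuousWithinAt)
    (fun _ hs => (hx.hasDerivAt_comp hV (Ico_subset_Icc_self hs)).hasDerivWithinAt) h₀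
    (fun _ => hasDerivAt_const _ c) (fun _ _ hs => hlevel _ hs) ht

theorem IsSolutionOn.apply_le_sub_mul {β : ℝ} (hV : Differentiable ℝ V)
    (hx : IsSolutionOn F x (Icc t₀ T))
    (hrate : ∀ t ∈ Ico t₀ T, fderiv ℝ V (x t) (F (x t)) ≤ -β) :
    ∀ t ∈ Icc t₀ T, V (x t) ≤ V (x t₀) - β * (t - t₀) := by
  have hB : ∀ t, HasDerivAt (fun t => V (x t₀) - β * (t - t₀)) (-β) t := fun t => by
    simpa using ((hasDerivAt_id t).sub_const t₀).const_mul β |>.const_sub (V (x t₀))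
  exact image_le_of_deriv_right_le_deriv_boundary (f := V ∘ x)
    (fun _ hs => (hx.hasDerivAt_comp hV hs).continuousAt.continuousWithinAt)
    (fun _ hs => (hx.hasDerivAt_comp hV (Ico_subset_Icc_self hs)).hasDerivWithinAt)
    (by simp) (fun t _ => (hB t).continuousAt.continuousWithinAt)
    (fun t _ => (hB t).hasDerivWithinAt) hrate

structure IsStrictLyapunovFunction (F : E → E) (V : E → ℝ) (a b r : ℝ) (k m : ℕ) : Prop where
  differentiable : Differentiable ℝ V
  apply_zero : V 0 = 0
  a_pos : 0 < a
  b_pos : 0 < b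
  r_pos : 0 < r
  k_ne_zero : k ≠ 0
  mul_norm_pow_le : ∀ y, a * ‖y‖ ^ k ≤ V y
  fderiv_le : ∀ y, ‖y‖ ≤ r → fderiv ℝ V y (F y) ≤ -(b * ‖y‖ ^ m)

namespace IsStrictLyapunovFunction

variable {a b r : ℝ} {k m : ℕ}

theorem norm_le_of_apply_le (hV : IsStrictLyapunovFunction F V a b r k m) {y : E} {ρ : ℝ}
    (hρ : 0 ≤ ρ) (hy : V y ≤ a * ρ ^ k) : ‖y‖ ≤ ρ :=
  le_of_pow_le_pow_left₀ hV.k_ne_zero hρ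
    (le_of_mul_le_mul_left ((hV.mul_norm_pow_le y).trans hy) hV.a_pos)

theorem exists_apply_le_of_norm_lt (hV : IsStrictLyapunovFunction F V a b r k m) {η : ℝ}
    (hη : 0 < η) : ∃ δ > 0, ∀ y : E, ‖y‖ < δ → V y ≤ η := by
  have hnear : ∀ᶠ y in nhds (0 : E), V y < η :=
    hV.differentiable.continuous.continuousAt.eventually_lt continuousAt_const
      (hV.apply_zero ▸ hη)
  obtain ⟨δ, hδ, hball⟩ := Metric.eventually_nhds_iff.mp hnear
  exact ⟨δ, hδ, fun y hy => (hball (by rwa [dist_zero_right])).le⟩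

theorem mapsTo_closedBall (hV : IsStrictLyapunovFunction F V a b r k m) {ρ : ℝ}
    (hρ : 0 < ρ) (hρr : ρ ≤ r) (hx : IsSolutionOn F x (Icc t₀ T))
    (h₀ : V (x t₀) ≤ a * ρ ^ k) : MapsTo x (Icc t₀ T) (Metric.closedBall 0 ρ) := by
  have hlevel : ∀ y, V y = a * ρ ^ k → fderiv ℝ V y (F y) < 0 := by
    intro y hy
    have hy₀ : y ≠ 0 := by
      rintro rfl
      exact (mul_pos hV.a_pos (pow_pos hρ k)).ne' (hy.symm.trans hV.apply_zero)
    have hyρ : ‖y‖ ≤ ρ := hV.norm_le_of_apply_le hρ.le hy.le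
    have hdec := hV.fderiv_le y (hyρ.trans hρr)
    have hrate : 0 < b * ‖y‖ ^ m := mul_pos hV.b_pos (pow_pos (norm_pos_iff.mpr hy₀) m)
    linarith
  intro t ht
  simpa using hV.norm_le_of_apply_le hρ.le (hx.mapsTo_sublevel hV.differentiable hlevel h₀ ht)

theorem exists_pos_forall_norm_lt (hV : IsStrictLyapunovFunction F V a b r k m) {ε : ℝ}
    (hε : 0 < ε) : ∃ δ > 0, ∀ (x : ℝ → E) (t₀ T : ℝ), IsSolutionOn F x (Icc t₀ T) →
      ‖x t₀‖ < δ → ∀ t ∈ Icc t₀ T, ‖x t‖ < ε := by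
  set ρ := min (ε / 2) r
  have hρ : 0 < ρ := lt_min (half_pos hε) hV.r_pos
  obtain ⟨δ, hδ, hsmall⟩ := hV.exists_apply_le_of_norm_lt (mul_pos hV.a_pos (pow_pos hρ k))
  refine ⟨δ, hδ, fun x t₀ T hx hx₀ t ht => ?_⟩
  have := hV.mapsTo_closedBall hρ (min_le_right _ _) hx (hsmall _ hx₀) ht
  rw [Metric.mem_closedBall, dist_zero_right] at this
  linarith [min_le_left (ε / 2) r]

theorem lyapunovStable (hV : IsStrictLyapunovFunction F V a b r k m) : LyapunovStable F := by
  intro ε hε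
  obtain ⟨δ, hδ, hstable⟩ := hV.exists_pos_forall_norm_lt hε
  exact ⟨δ, hδ, fun T x hx => hstable x 0 T hx⟩

theorem apply_nonneg (hV : IsStrictLyapunovFunction F V a b r k m) (y : E) : 0 ≤ V y :=
  (mul_nonneg hV.a_pos.le (by positivity)).trans (hV.mul_norm_pow_le y)

theorem exists_norm_lt (hV : IsStrictLyapunovFunction F V a b r k m)
    (hx : IsSolutionOn F x (Ici 0)) (hr : ∀ t ≥ 0, ‖x t‖ ≤ r) {δ : ℝ} (hδ : 0 < δ) :
    ∃ t ≥ 0, ‖x t‖ < δ := by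
  by_contra! hfar
  set β := b * δ ^ m
  have hβ : 0 < β := mul_pos hV.b_pos (pow_pos hδ m)
  have hrate : ∀ t ∈ Ici (0 : ℝ), fderiv ℝ V (x t) (F (x t)) ≤ -β := fun t ht => by
    have hdec := hV.fderiv_le _ (hr t ht)
    have hβle : β ≤ b * ‖x t‖ ^ m :=
      mul_le_mul_of_nonneg_left (pow_le_pow_left₀ hδ.le (hfar t ht) m) hV.b_pos.le
    linarith
  -- decay at rate `β` up to time `T` would make `V (x T)` negative
  set T := V (x 0) / β + 1
  have hT : 0 ≤ T := by have := hV.apply_nonneg (x 0); positivity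
  have hdecay := (hx.mono Icc_subset_Ici_self).apply_le_sub_mul hV.differentiable
    (fun t ht => hrate t ht.1) T ⟨hT, le_rfl⟩
  have hβT : β * (T - 0) = V (x 0) + β := by
    rw [sub_zero, mul_add, mul_div_cancel₀ _ hβ.ne', mul_one]
  linarith [hV.apply_nonneg (x T)]

theorem locallyAttractive (hV : IsStrictLyapunovFunction F V a b r k m) :
    LocallyAttractive F := by
  obtain ⟨δ, hδ, hstable⟩ := hV.exists_pos_forall_norm_lt hV.r_pos
  refine ⟨δ, hδ, fun x hx hx₀ => Metric.tendsto_atTop.mpr fun ε hε => ?_⟩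
  have hr : ∀ t ≥ 0, ‖x t‖ ≤ r := fun t ht =>
    (hstable x 0 t (hx.mono Icc_subset_Ici_self) hx₀ t ⟨ht, le_rfl⟩).le
  obtain ⟨δ', hδ', hstable'⟩ := hV.exists_pos_forall_norm_lt hε
  obtain ⟨t₀, ht₀, hxt₀⟩ := hV.exists_norm_lt hx hr hδ'
  refine ⟨t₀, fun t ht => ?_⟩
  rw [dist_zero_right]
  exact hstable' x t₀ t (hx.mono fun s hs => ht₀.trans hs.1) hxt₀ t ⟨ht, le_rfl⟩

theorem las (hV : IsStrictLyapunovFunction F V a b r k m) : LAS F :=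
  ⟨hV.lyapunovStable, hV.locallyAttractive⟩

end IsStrictLyapunovFunction

end Lyapunov

open scoped InnerProductSpace

section Homogeneous

variable {E : Type*} [NormedAddCommGroup E] [NormedSpace ℝ E] {V : E → ℝ} {k : ℕ}

theorem fderiv_apply_self_of_homogeneous {x : E} (hV : DifferentiableAt ℝ V x)
    (hhom : ∀ lam : ℝ, V (lam • x) = lam ^ k * V x) : fderiv ℝ V x x = k * V x := by
  have hline : HasDerivAt (fun lam : ℝ => lam • x) x 1 := by
    simpa using (hasDerivAt_id (1 : ℝ)).smul_const x
  have h₁ : HasDerivAt (fun lam : ℝ => V (lam • x)) (fderiv ℝ V x x) 1 :=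
    hV.hasFDerivAt.comp_hasDerivAt_of_eq 1 hline (one_smul ℝ x).symm
  have h₂ : HasDerivAt (fun lam : ℝ => V (lam • x)) (k * V x) 1 := by
    simp_rw [hhom]
    simpa using (hasDerivAt_pow k (1 : ℝ)).mul_const (V x)
  exact h₁.unique h₂

theorem exists_pos_mul_norm_pow_le [ProperSpace E] (hk : k ≠ 0) (hV : Continuous V)
    (hhom : ∀ (lam : ℝ) (x : E), V (lam • x) = lam ^ k * V x)
    (hpos : ∀ x : E, x ≠ 0 → 0 < V x) : ∃ a > 0, ∀ x : E, a * ‖x‖ ^ k ≤ V x := by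
  obtain ⟨a, ha, hsphere⟩ := (isCompact_sphere (0 : E) 1).exists_forall_le' hV.continuousOn
    fun u hu => hpos u (ne_zero_of_mem_unit_sphere ⟨u, hu⟩)
  refine ⟨a, ha, fun x => ?_⟩
  rcases eq_or_ne x 0 with rfl | hx
  · have hV0 : V 0 = 0 := by simpa [hk] using hhom 0 0
    simp [hk, hV0]
  · have hxpos : 0 < ‖x‖ := norm_pos_iff.mpr hx
    have hu : ‖x‖⁻¹ • x ∈ Metric.sphere (0 : E) 1 := by
      simp [norm_smul, hxpos.ne']
    have hscale : V x = ‖x‖ ^ k * V (‖x‖⁻¹ • x) := by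
      rw [← hhom, smul_smul, mul_inv_cancel₀ hxpos.ne', one_smul]
    rw [hscale, mul_comm]
    exact mul_le_mul_of_nonneg_left (hsphere _ hu) (by positivity)

end Homogeneous

theorem differentiable_of_eq_eval {n : ℕ} {V : EuclideanSpace ℝ (Fin n) → ℝ}
    (hpoly : ∃ P : MvPolynomial (Fin n) ℝ, ∀ x : EuclideanSpace ℝ (Fin n),
      V x = MvPolynomial.eval (x : Fin n → ℝ) P) : Differentiable ℝ V := by
  obtain ⟨P, hP⟩ := hpoly
  rw [show V = (MvPolynomial.eval · P) ∘ EuclideanSpace.equiv (Fin n) ℝ from funext hP]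
  exact (differentiableOn_univ.mp (AnalyticOnNhd.eval_mvPolynomial P).differentiableOn).comp
    (EuclideanSpace.equiv (Fin n) ℝ).differentiable

theorem norm_pow4_le {n : ℕ} (x : EuclideanSpace ℝ (Fin n)) : ‖pow4 x‖ ≤ ‖x‖ ^ 4 := by
  have hsq : ‖pow4 x‖ ^ 2 ≤ (‖x‖ ^ 4) ^ 2 := by
    calc ‖pow4 x‖ ^ 2 = ∑ i, (x i ^ 2) ^ 3 * x i ^ 2 := by
          rw [EuclideanSpace.real_norm_sq_eq]
          congr 1; ext i; simp only [pow4]; ring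
      _ ≤ ∑ i, (‖x‖ ^ 2) ^ 3 * x i ^ 2 := by
          refine Finset.sum_le_sum fun i _ => ?_
          have hi : x i ^ 2 ≤ ‖x‖ ^ 2 := by
            rw [← sq_abs, ← Real.norm_eq_abs]
            exact pow_le_pow_left₀ (norm_nonneg _) (PiLp.norm_apply_le x i) 2
          gcongr
      _ = (‖x‖ ^ 4) ^ 2 := by
          rw [← Finset.mul_sum, ← EuclideanSpace.real_norm_sq_eq]; ring
  exact (pow_le_pow_iff_left₀ (norm_nonneg _) (by positivity) two_ne_zero).mp hsq

theorem inner_neg_add_le {F : Type*} [NormedAddCommGroup F] [InnerProductSpace ℝ F]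
    {g p : F} {c s : ℝ} (hs : 0 ≤ s) (hsc : 2 * s ≤ c) (hg : c * s ^ 3 ≤ ‖g‖)
    (hp : ‖p‖ ≤ s ^ 4) : ⟪g, -g + p⟫_ℝ ≤ -(c ^ 2 / 2 * s ^ 6) := by
  have hgp : ⟪g, p⟫_ℝ ≤ ‖g‖ * s ^ 4 :=
    (real_inner_le_norm g p).trans (mul_le_mul_of_nonneg_left hp (norm_nonneg g))
  rw [inner_add_right, inner_neg_right, real_inner_self_eq_norm_sq]
  have hs3 : 0 ≤ s ^ 3 := by positivity
  have hgap : c / 2 * s ^ 3 ≤ ‖g‖ - s ^ 4 := by nlinarith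
  nlinarith [mul_le_mul hg hgap (by nlinarith) (norm_nonneg g)]

theorem mul_norm_pow_le_norm_gradient_mul_norm {F : Type*} [NormedAddCommGroup F]
    [InnerProductSpace ℝ F] [CompleteSpace F] {V : F → ℝ} {a : ℝ} {k : ℕ} {x : F}
    (hV : DifferentiableAt ℝ V x) (hhom : ∀ lam : ℝ, V (lam • x) = lam ^ k * V x)
    (hlow : a * ‖x‖ ^ k ≤ V x) : k * a * ‖x‖ ^ k ≤ ‖gradient V x‖ * ‖x‖ :=
  calc k * a * ‖x‖ ^ k ≤ k * V x := by rw [mul_assoc]; gcongr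
    _ = ⟪gradient V x, x⟫_ℝ := by
      rw [inner_gradient_left, fderiv_apply_self_of_homogeneous hV hhom]
    _ ≤ ‖gradient V x‖ * ‖x‖ := real_inner_le_norm _ _

theorem isStrictLyapunovFunction_neg_gradient_add_pow4 {n : ℕ}
    {V : EuclideanSpace ℝ (Fin n) → ℝ} (hV : Differentiable ℝ V)
    (hhom : ∀ (lam : ℝ) (x : EuclideanSpace ℝ (Fin n)), V (lam • x) = lam ^ 4 * V x) {a : ℝ}
    (ha : 0 < a) (hlow : ∀ x, a * ‖x‖ ^ 4 ≤ V x) :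
    IsStrictLyapunovFunction (fun x => -gradient V x + pow4 x) V a (8 * a ^ 2) (2 * a) 4 6 where
  differentiable := hV
  apply_zero := by simpa using hhom 0 0
  a_pos := ha
  b_pos := by positivity
  r_pos := by positivity
  k_ne_zero := four_ne_zero
  mul_norm_pow_le := hlow
  fderiv_le y hy := by
    have hgrad : 4 * a * ‖y‖ ^ 3 ≤ ‖gradient V y‖ := by
      rcases eq_or_ne y 0 with rfl | hy₀
      · simp
      refine le_of_mul_le_mul_right ?_ (norm_pos_iff.mpr hy₀)
      have := mul_norm_pow_le_norm_gradient_mul_norm (hV y) (hhom · y) (hlow y)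
      push_cast at this
      linarith [show 4 * a * ‖y‖ ^ 3 * ‖y‖ = 4 * a * ‖y‖ ^ 4 by ring]
    rw [← inner_gradient_left]
    have := inner_neg_add_le (norm_nonneg y) (by linarith) hgrad (norm_pow4_le y)
    linarith

theorem stmt13 {n : ℕ} (V : EuclideanSpace ℝ (Fin n) → ℝ)
    (hpoly : ∃ P : MvPolynomial (Fin n) ℝ, ∀ x : EuclideanSpace ℝ (Fin n),
      V x = MvPolynomial.eval (x : Fin n → ℝ) P)
    (hhom : ∀ (lam : ℝ) (x : EuclideanSpace ℝ (Fin n)), V (lam • x) = lam ^ 4 * V x)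
    (hpos : ∀ x : EuclideanSpace ℝ (Fin n), x ≠ 0 → 0 < V x) :
    LAS (fun x => -gradient V x + pow4 x) := by
  have hV : Differentiable ℝ V := differentiable_of_eq_eval hpoly
  obtain ⟨a, ha, hlow⟩ := exists_pos_mul_norm_pow_le four_ne_zero hV.continuous hhom hpos
  exact (isStrictLyapunovFunction_neg_gradient_add_pow4 hV hhom ha hlow).las
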